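/- Let k ≥ 2 and let G ⊂ GL(2,ℝ) be the cyclic group of order k generated by the rotation of ℝ² through angle 2π/k. Then the ℝ-algebra of G-invariant polynomials in ℝ[x,y] is generated by p₁ = x² + y², p₂ = Re((x+iy)^k), and p₃ = Im((x+iy)^k). -/

import Mathlib

/-!
In the isotropic coordinates `z = x + i y`, `w = x - i y` of `ℂ²`, the rotation through `2π/k`
acts diagonally by `(ζ, ζ⁻¹)` with `ζ` a primitive `k`-th root of unity. Hence the
complexification of an invariant polynomial is a combination of monomials `z^a w^b` with
`k ∣ a - b`, each a product of powers of `z w`, `z^k` and `w^k`. In the real coordinates these are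
`x² + y²` and `p₂ ± i p₃`, and taking coefficientwise real parts turns the resulting complex
expression of the polynomial into a real one.
-/

open Matrix MvPolynomial

noncomputable section

/-- Action of an invertible real matrix on a vector in `ℝ^d`. -/
def act {d : ℕ} (g : GL (Fin d) ℝ) (v : Fin d → ℝ) : Fin d → ℝ :=
  (g : Matrix (Fin d) (Fin d) ℝ).mulVec v

/-- Orbit of a vector under a subgroup of `GL (Fin d) ℝ`. -/
def orbitOf {d : ℕ} (G : Subgroup (GL (Fin d) ℝ)) (v : Fin d → ℝ) : Set (Fin d → ℝ) :=
  {x | ∃ g ∈ G, act g v = x}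

/-- A quasi-isomorphism: a linear isomorphism sending `G`-orbits to `H`-orbits,
whose inverse sends `H`-orbits to `G`-orbits. -/
def IsQuasiIso {d e : ℕ} (G : Subgroup (GL (Fin d) ℝ)) (H : Subgroup (GL (Fin e) ℝ))
    (L : (Fin d → ℝ) ≃ₗ[ℝ] (Fin e → ℝ)) : Prop :=
  (∀ v : Fin d → ℝ, ∃ w : Fin e → ℝ, ⇑L '' orbitOf G v = orbitOf H w) ∧
  (∀ w : Fin e → ℝ, ∃ v : Fin d → ℝ, ⇑L.symm '' orbitOf H w = orbitOf G v)

/-- `P` is a `G`-invariant polynomial. -/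
def IsInv {d : ℕ} (G : Subgroup (GL (Fin d) ℝ)) (P : MvPolynomial (Fin d) ℝ) : Prop :=
  ∀ g ∈ G, ∀ v : Fin d → ℝ, eval (act g v) P = eval v P

/-- The polynomial map `ℝ^d → ℝ^m` given by a family of polynomials. -/
def evalMap {d m : ℕ} (p : Fin m → MvPolynomial (Fin d) ℝ) (v : Fin d → ℝ) : Fin m → ℝ :=
  fun i => eval v (p i)

/-- Real Zariski closure of a subset of `ℝ^m`: the common zero set of all real
polynomials vanishing identically on `S`. -/
def zarClosure {m : ℕ} (S : Set (Fin m → ℝ)) : Set (Fin m → ℝ) :=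
  {y | ∀ P : MvPolynomial (Fin m) ℝ, (∀ s ∈ S, eval s P = 0) → eval y P = 0}

/-- `G` contains no reflections: every nonidentity element `g` has `rank (g - 1) ≥ 2`. -/
def NoReflections {d : ℕ} (G : Subgroup (GL (Fin d) ℝ)) : Prop :=
  ∀ g ∈ G, g ≠ 1 → 2 ≤ ((g : Matrix (Fin d) (Fin d) ℝ) - 1).rank

/-- The rotation of `ℝ²` through angle `θ`, as an element of `GL (Fin 2) ℝ`. -/
def rotGL (θ : ℝ) : GL (Fin 2) ℝ :=
  Matrix.planeConformalMatrix (Real.cos θ) (Real.sin θ)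
    (by nlinarith [Real.sin_sq_add_cos_sq θ])

local notation "ι" => MvPolynomial.map Complex.ofRealHom

section LinearSubstitution

variable {R : Type*} [CommRing R] {n : Type*} [Fintype n]

lemma bind₁_toMvPolynomial_bind₁ (M N : Matrix n n R) (p : MvPolynomial n R) :
    bind₁ N.toMvPolynomial (bind₁ M.toMvPolynomial p) = bind₁ (M * N).toMvPolynomial p := by
  rw [bind₁_bind₁]
  congr
  funext i
  exact (toMvPolynomial_mul M N i).symm

lemma eval_bind₁_toMvPolynomial (M : Matrix n n R) (v : n → R) (p : MvPolynomial n R) :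
    eval v (bind₁ M.toMvPolynomial p) = eval (M *ᵥ v) p := by
  rw [eval, eval₂Hom_bind₁]
  exact congrArg (eval · p) (funext fun i => toMvPolynomial_eval_eq_apply M i v)

lemma toMvPolynomial_diagonal [DecidableEq n] (c : n → R) (i : n) :
    (diagonal c).toMvPolynomial i = C (c i) * X i := by
  rw [toMvPolynomial, Finset.sum_eq_single i (fun j _ hj => by simp [diagonal_apply_ne _ hj.symm])
    (by simp), diagonal_apply_eq, C_mul_X_eq_monomial]

lemma bind₁_diagonal_monomial [DecidableEq n] (c : n → R) (m : n →₀ ℕ) (r : R) :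
    bind₁ (diagonal c).toMvPolynomial (monomial m r)
      = monomial m ((m.prod fun i e => c i ^ e) * r) := by
  rw [bind₁_monomial, monomial_eq, Finsupp.prod, Finsupp.prod]
  simp only [toMvPolynomial_diagonal, mul_pow, ← C_pow, Finset.prod_mul_distrib, ← map_prod, C_mul]
  ring

lemma coeff_bind₁_diagonal [DecidableEq n] (c : n → R) (p : MvPolynomial n R) (m : n →₀ ℕ) :
    coeff m (bind₁ (diagonal c).toMvPolynomial p) = (m.prod fun i e => c i ^ e) * coeff m p := by
  induction p using MvPolynomial.induction_on' with
  | monomial d r =>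
    rw [bind₁_diagonal_monomial, coeff_monomial, coeff_monomial]
    split_ifs with h
    · rw [h]
    · rw [mul_zero]
  | add p q hp hq => rw [map_add, coeff_add, coeff_add, hp, hq, mul_add]

end LinearSubstitution

section Complexification

variable {σ : Type*}

lemma eval_ofReal_map_ofRealHom (v : σ → ℝ) (p : MvPolynomial σ ℝ) :
    eval (fun i => (v i : ℂ)) (ι p) = eval v p := by
  rw [eval_map]
  exact (eval₂_comp_left Complex.ofRealHom (RingHom.id ℝ) v p).symm

lemma eq_of_eval_ofReal_eq {p q : MvPolynomial σ ℂ}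
    (h : ∀ v : σ → ℝ, eval (fun i => (v i : ℂ)) p = eval (fun i => (v i : ℂ)) q) : p = q := by
  refine funext_set (fun _ => Set.range Complex.ofReal)
    (fun _ => Set.infinite_range_of_injective Complex.ofReal_injective) fun x hx => ?_
  have hx_real : x = fun i => ((x i).re : ℂ) := by
    funext i
    obtain ⟨r, hr⟩ := hx i trivial
    rw [← hr, Complex.ofReal_re]
  rw [hx_real]
  exact h _

def rePart (p : MvPolynomial σ ℂ) : MvPolynomial σ ℝ :=
  AddMonoidAlgebra.map Complex.reAddGroupHom p

lemma rePart_zero : rePart (0 : MvPolynomial σ ℂ) = 0 :=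
  AddMonoidAlgebra.map_zero _

lemma rePart_add (p q : MvPolynomial σ ℂ) : rePart (p + q) = rePart p + rePart q :=
  AddMonoidAlgebra.map_add _ p q

lemma rePart_smul_map_ofRealHom (c : ℂ) (a : MvPolynomial σ ℝ) :
    rePart (c • ι a) = c.re • a := by
  ext m
  simp [rePart, coeff_map]

lemma mem_adjoin_of_map_ofRealHom_mem_adjoin {S : Set (MvPolynomial σ ℝ)} {P : MvPolynomial σ ℝ}
    (h : ι P ∈ Algebra.adjoin ℂ (ι '' S)) :
    P ∈ Algebra.adjoin ℝ S := by
  set A := Algebra.adjoin ℝ S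
  have hclosure : (Submonoid.closure (ι '' S) : Set (MvPolynomial σ ℂ)) ⊆ ι '' A := by
    refine Submonoid.closure_le (S := A.toSubmonoid.map ι).mpr ?_
    exact Set.image_mono Algebra.subset_adjoin
  have hspan : ι P ∈ Submodule.span ℂ (ι '' A) := by
    refine Submodule.span_mono hclosure ?_
    rw [← Algebra.adjoin_eq_span]
    exact h
  -- Quantifying over `c` makes the predicate stable under complex scalar multiplication.
  have key : ∀ x ∈ Submodule.span ℂ (ι '' A), ∀ c : ℂ, rePart (c • x) ∈ A := by
    intro x hx
    induction hx using Submodule.span_induction with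
    | mem x hx =>
      obtain ⟨a, ha, rfl⟩ := hx
      intro c
      rw [rePart_smul_map_ofRealHom]
      exact A.smul_mem ha c.re
    | zero => intro c; rw [smul_zero, rePart_zero]; exact zero_mem A
    | add x y _ _ hx hy => intro c; rw [smul_add, rePart_add]; exact add_mem (hx c) (hy c)
    | smul c' x _ hx => intro c; rw [smul_smul]; exact hx _
  have hre := key _ hspan 1
  rwa [rePart_smul_map_ofRealHom, Complex.one_re, one_smul] at hre

end Complexification

section Monomials

lemma pow_mul_pow_mem_adjoin {R A : Type*} [CommSemiring R] [CommSemiring A] [Algebra R A]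
    (u v : A) {k a b : ℕ} (h : (k : ℤ) ∣ (a : ℤ) - b) :
    u ^ a * v ^ b ∈ Algebra.adjoin R {u * v, u ^ k, v ^ k} := by
  wlog hba : b ≤ a generalizing u v a b
  · have hvu := this v u (dvd_sub_comm.mp h) (le_of_not_ge hba)
    rwa [mul_comm (v ^ b), mul_comm v, Set.pair_comm] at hvu
  obtain ⟨t, ht⟩ : k ∣ a - b := Int.natCast_dvd_natCast.mp (by rwa [Nat.cast_sub hba])
  obtain rfl : a = b + k * t := by omega
  rw [pow_add, pow_mul, mul_right_comm, ← mul_pow]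
  exact mul_mem (pow_mem (Algebra.subset_adjoin (by simp)) _)
    (pow_mem (Algebra.subset_adjoin (by simp)) _)

variable {R : Type*} [CommSemiring R] {k : ℕ}

lemma mem_adjoin_of_dvd_sub {p : MvPolynomial (Fin 2) R}
    (h : ∀ m ∈ p.support, (k : ℤ) ∣ (m 0 : ℤ) - m 1) :
    p ∈ Algebra.adjoin R {X 0 * X 1, X 0 ^ k, X 1 ^ k} := by
  rw [p.as_sum]
  refine Subalgebra.sum_mem _ fun m hm => ?_
  rw [monomial_eq, Finsupp.prod_fintype _ _ (fun _ => pow_zero _), Fin.prod_univ_two,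
    ← algebraMap_eq]
  exact mul_mem (Subalgebra.algebraMap_mem _ _) (pow_mul_pow_mem_adjoin _ _ (h m hm))

lemma dvd_sub_of_bind₁_diagonal_eq {K : Type*} [Field K] {ζ : K} (hζ : IsPrimitiveRoot ζ k)
    (hk : k ≠ 0) {p : MvPolynomial (Fin 2) K}
    (hp : bind₁ (diagonal ![ζ, ζ⁻¹]).toMvPolynomial p = p) {m : Fin 2 →₀ ℕ}
    (hm : m ∈ p.support) : (k : ℤ) ∣ (m 0 : ℤ) - m 1 := by
  have hcoeff := congrArg (coeff m) hp
  rw [coeff_bind₁_diagonal] at hcoeff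
  have hprod : (m.prod fun i e => ![ζ, ζ⁻¹] i ^ e) = 1 :=
    mul_right_cancel₀ (mem_support_iff.mp hm) (hcoeff.trans (one_mul _).symm)
  rw [Finsupp.prod_fintype _ _ (fun _ => pow_zero _), Fin.prod_univ_two] at hprod
  have hζ0 := hζ.ne_zero hk
  rw [← hζ.zpow_eq_one_iff_dvd, zpow_sub₀ hζ0, zpow_natCast, zpow_natCast, div_eq_one_iff_eq
    (pow_ne_zero _ hζ0)]
  simpa [inv_pow, mul_inv_eq_one₀ (pow_ne_zero _ hζ0)] using hprod

lemma mem_adjoin_of_bind₁_diagonal_eq {K : Type*} [Field K] {ζ : K} (hζ : IsPrimitiveRoot ζ k)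
    (hk : k ≠ 0) {p : MvPolynomial (Fin 2) K}
    (hp : bind₁ (diagonal ![ζ, ζ⁻¹]).toMvPolynomial p = p) :
    p ∈ Algebra.adjoin K {X 0 * X 1, X 0 ^ k, X 1 ^ k} :=
  mem_adjoin_of_dvd_sub fun _ hm => dvd_sub_of_bind₁_diagonal_eq hζ hk hp hm

end Monomials

section Invariance

variable {d : ℕ}

lemma act_mul (a b : GL (Fin d) ℝ) (v : Fin d → ℝ) : act (a * b) v = act a (act b v) := by
  simp [act, mulVec_mulVec]

lemma act_one (v : Fin d → ℝ) : act (1 : GL (Fin d) ℝ) v = v := by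
  simp [act]

def actStabilizer (P : MvPolynomial (Fin d) ℝ) : Subgroup (GL (Fin d) ℝ) where
  carrier := {g | ∀ v, eval (act g v) P = eval v P}
  one_mem' v := by rw [act_one]
  mul_mem' ha hb v := by rw [act_mul, ha, hb]
  inv_mem' {a} ha v := by rw [← ha (act a⁻¹ v), ← act_mul, mul_inv_cancel, act_one]

lemma isInv_zpowers_iff (g : GL (Fin d) ℝ) (P : MvPolynomial (Fin d) ℝ) :
    IsInv (Subgroup.zpowers g) P ↔ ∀ v, eval (act g v) P = eval v P :=
  ⟨fun h => h g (Subgroup.mem_zpowers g),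
    fun h _ hg => (Subgroup.zpowers_le (H := actStabilizer P)).mpr h hg⟩

def actInvariants (g : GL (Fin d) ℝ) : Subalgebra ℝ (MvPolynomial (Fin d) ℝ) where
  carrier := {P | ∀ v, eval (act g v) P = eval v P}
  mul_mem' hP hQ v := by simp only [map_mul, hP v, hQ v]
  add_mem' hP hQ v := by simp only [map_add, hP v, hQ v]
  algebraMap_mem' r v := by simp only [algebraMap_eq, eval_C]

lemma bind₁_toMvPolynomial_eq_of_eval_act {g : GL (Fin d) ℝ} {P : MvPolynomial (Fin d) ℝ}
    (h : ∀ v, eval (act g v) P = eval v P) :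
    bind₁ (g : Matrix (Fin d) (Fin d) ℝ).toMvPolynomial P = P :=
  MvPolynomial.funext fun v => by rw [eval_bind₁_toMvPolynomial]; exact h v

end Invariance

section Rotation

open Complex

lemma act_rotGL (θ : ℝ) (v : Fin 2 → ℝ) :
    act (rotGL θ) v
      = ![Real.cos θ * v 0 - Real.sin θ * v 1, Real.sin θ * v 0 + Real.cos θ * v 1] := by
  simp [act, rotGL, planeConformalMatrix, cons_mulVec, vecHead, vecTail, sub_eq_add_neg]

lemma rotGL_map_ofRealHom (θ : ℝ) :
    (rotGL θ : Matrix (Fin 2) (Fin 2) ℝ).map ofRealHom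
      = !![(Real.cos θ : ℂ), -Real.sin θ; Real.sin θ, Real.cos θ] := by
  ext i j
  fin_cases i <;> fin_cases j <;> simp [rotGL, planeConformalMatrix]

lemma ofReal_act_rotGL (θ : ℝ) (v : Fin 2 → ℝ) :
    (act (rotGL θ) v 0 : ℂ) + I * act (rotGL θ) v 1 = exp (θ * I) * (v 0 + I * v 1) := by
  rw [act_rotGL, exp_mul_I, ← ofReal_cos, ← ofReal_sin]
  simp only [cons_val_zero, cons_val_one, ofReal_sub, ofReal_add, ofReal_mul]
  linear_combination (-(Real.sin θ : ℂ) * v 1) * I_mul_I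

/-- `isotropic *ᵥ (x, y) = (x + i y, x - i y)`: in these coordinates rotations are diagonal. -/
def isotropic : Matrix (Fin 2) (Fin 2) ℂ := !![1, I; 1, -I]

def isotropicInv : Matrix (Fin 2) (Fin 2) ℂ := !![1 / 2, 1 / 2; -I / 2, I / 2]

lemma isotropicInv_mul_isotropic : isotropicInv * isotropic = 1 := by
  rw [isotropicInv, isotropic, mul_fin_two, one_fin_two]
  congr 1
  refine vec2_eq (vec2_eq ?_ ?_) (vec2_eq ?_ ?_)
  · norm_num
  · ring
  · ring
  · linear_combination (-1 : ℂ) * I_mul_I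

lemma rotGL_map_mul_isotropicInv (θ : ℝ) :
    (rotGL θ : Matrix (Fin 2) (Fin 2) ℝ).map ofRealHom * isotropicInv
      = isotropicInv * diagonal ![exp (θ * I), (exp (θ * I))⁻¹] := by
  have hζ : exp (θ * I) = Real.cos θ + Real.sin θ * I := by
    rw [exp_mul_I, ← ofReal_cos, ← ofReal_sin]
  have hζinv : (exp (θ * I))⁻¹ = Real.cos θ - Real.sin θ * I := by
    rw [← exp_neg, ← neg_mul, ← ofReal_neg, exp_mul_I, ← ofReal_cos, ← ofReal_sin, Real.cos_neg,
      Real.sin_neg, ofReal_neg, neg_mul, sub_eq_add_neg]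
  rw [hζinv, hζ, rotGL_map_ofRealHom, isotropicInv, diagonal_fin_two, mul_fin_two, mul_fin_two]
  simp only [cons_val_zero, cons_val_one, cons_val_fin_one]
  congr 1
  refine vec2_eq (vec2_eq ?_ ?_) (vec2_eq ?_ ?_)
  · ring
  · ring
  · linear_combination (Real.sin θ / 2 : ℂ) * I_mul_I
  · linear_combination (Real.sin θ / 2 : ℂ) * I_mul_I

lemma bind₁_diagonal_of_bind₁_rotGL_eq {θ : ℝ} {P : MvPolynomial (Fin 2) ℝ}
    (hP : bind₁ (rotGL θ : Matrix (Fin 2) (Fin 2) ℝ).toMvPolynomial P = P) :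
    bind₁ (diagonal ![exp (θ * I), (exp (θ * I))⁻¹]).toMvPolynomial
        (bind₁ isotropicInv.toMvPolynomial (ι P))
      = bind₁ isotropicInv.toMvPolynomial (ι P) := by
  have hPℂ : bind₁ ((rotGL θ : Matrix (Fin 2) (Fin 2) ℝ).map ofRealHom).toMvPolynomial (ι P)
      = ι P := by
    rw [_root_.funext (toMvPolynomial_map ofRealHom _), ← map_bind₁, hP]
  rw [bind₁_toMvPolynomial_bind₁, ← rotGL_map_mul_isotropicInv, ← bind₁_toMvPolynomial_bind₁,
    hPℂ]

lemma bind₁_isotropic_bind₁_isotropicInv (p : MvPolynomial (Fin 2) ℂ) :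
    bind₁ isotropic.toMvPolynomial (bind₁ isotropicInv.toMvPolynomial p) = p := by
  rw [bind₁_toMvPolynomial_bind₁, isotropicInv_mul_isotropic, toMvPolynomial_one, bind₁_X_left,
    AlgHom.id_apply]

lemma isotropic_mulVec_ofReal (v : Fin 2 → ℝ) :
    isotropic *ᵥ (fun i => (v i : ℂ)) = ![v 0 + I * v 1, v 0 - I * v 1] := by
  simp [isotropic, cons_mulVec, vecHead, vecTail, sub_eq_add_neg]

lemma bind₁_isotropic_X_zero_mul_X_one :
    bind₁ isotropic.toMvPolynomial (X 0 * X 1) = ι (X 0 ^ 2 + X 1 ^ 2) := by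
  refine eq_of_eval_ofReal_eq fun v => ?_
  rw [eval_bind₁_toMvPolynomial, eval_ofReal_map_ofRealHom, isotropic_mulVec_ofReal]
  simp only [map_mul, map_add, map_pow, eval_X, cons_val_zero, cons_val_one,
    ofReal_add, ofReal_pow]
  linear_combination (-(v 1 : ℂ) ^ 2) * I_mul_I

lemma eval_act_rotGL_sq_add_sq (θ : ℝ) (v : Fin 2 → ℝ) :
    eval (act (rotGL θ) v) (X 0 ^ 2 + X 1 ^ 2) = eval v (X 0 ^ 2 + X 1 ^ 2) := by
  simp only [act_rotGL, map_add, map_pow, eval_X, cons_val_zero, cons_val_one]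
  linear_combination (v 0 ^ 2 + v 1 ^ 2) * Real.sin_sq_add_cos_sq θ

end Rotation

section Generators

open Complex

variable {k : ℕ} {p₂ p₃ : MvPolynomial (Fin 2) ℝ}
  (h23 : ∀ v : Fin 2 → ℝ, ((eval v p₂ : ℝ) : ℂ) + I * ((eval v p₃ : ℝ) : ℂ)
    = ((v 0 : ℂ) + I * (v 1 : ℂ)) ^ k)
include h23

lemma bind₁_isotropic_X_zero_pow :
    bind₁ isotropic.toMvPolynomial (X 0 ^ k) = ι p₂ + C I * ι p₃ := by
  refine eq_of_eval_ofReal_eq fun v => ?_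
  rw [eval_bind₁_toMvPolynomial, isotropic_mulVec_ofReal, map_add, map_mul, eval_C,
    eval_ofReal_map_ofRealHom, eval_ofReal_map_ofRealHom, h23]
  simp

lemma bind₁_isotropic_X_one_pow :
    bind₁ isotropic.toMvPolynomial (X 1 ^ k) = ι p₂ - C I * ι p₃ := by
  refine eq_of_eval_ofReal_eq fun v => ?_
  rw [eval_bind₁_toMvPolynomial, isotropic_mulVec_ofReal, map_sub, map_mul, eval_C,
    eval_ofReal_map_ofRealHom, eval_ofReal_map_ofRealHom]
  have hconj := congrArg (starRingEnd ℂ) (h23 v)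
  simp only [map_add, map_mul, map_pow, conj_ofReal, conj_I] at hconj
  simp only [map_pow, eval_X, cons_val_one, cons_val_fin_one]
  linear_combination -hconj

lemma adjoin_isotropic_image_le :
    Algebra.adjoin ℂ (bind₁ isotropic.toMvPolynomial '' {X 0 * X 1, X 0 ^ k, X 1 ^ k})
      ≤ Algebra.adjoin ℂ (ι '' {X 0 ^ 2 + X 1 ^ 2, p₂, p₃}) := by
  set A := Algebra.adjoin ℂ (ι '' {X 0 ^ 2 + X 1 ^ 2, p₂, p₃})
  have hmem : ∀ q ∈ ({X 0 ^ 2 + X 1 ^ 2, p₂, p₃} : Set (MvPolynomial (Fin 2) ℝ)), ι q ∈ A :=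
    fun q hq => Algebra.subset_adjoin (Set.mem_image_of_mem _ hq)
  have hI : (C I : MvPolynomial (Fin 2) ℂ) ∈ A := A.algebraMap_mem I
  rw [Algebra.adjoin_le_iff]
  rintro _ ⟨q, hq | hq | hq, rfl⟩ <;> subst hq
  · rw [bind₁_isotropic_X_zero_mul_X_one]
    exact hmem _ (by simp)
  · rw [bind₁_isotropic_X_zero_pow h23]
    exact add_mem (hmem _ (by simp)) (mul_mem hI (hmem _ (by simp)))
  · rw [bind₁_isotropic_X_one_pow h23]
    exact sub_mem (hmem _ (by simp)) (mul_mem hI (hmem _ (by simp)))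

lemma eval_act_rotGL_of_exp_pow_eq_one {θ : ℝ} (hθ : exp (θ * I) ^ k = 1) (v : Fin 2 → ℝ) :
    eval (act (rotGL θ) v) p₂ = eval v p₂ ∧ eval (act (rotGL θ) v) p₃ = eval v p₃ := by
  have h := h23 (act (rotGL θ) v)
  rw [ofReal_act_rotGL, mul_pow, hθ, one_mul, ← h23 v] at h
  simpa using Complex.ext_iff.mp h

end Generators

/-- the invariants of the cyclic rotation group of order `k`
acting on `ℝ²` are generated by `x² + y²`, `Re((x+iy)^k)` and `Im((x+iy)^k)`. -/
theorem stmt_18 (k : ℕ) (hk : 2 ≤ k) (p₂ p₃ : MvPolynomial (Fin 2) ℝ)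
    (h23 : ∀ v : Fin 2 → ℝ, ((eval v p₂ : ℝ) : ℂ) + Complex.I * ((eval v p₃ : ℝ) : ℂ)
      = ((v 0 : ℂ) + Complex.I * (v 1 : ℂ)) ^ k) :
    ∀ P : MvPolynomial (Fin 2) ℝ,
      IsInv (Subgroup.zpowers (rotGL (2 * Real.pi / k))) P ↔
        P ∈ Algebra.adjoin ℝ
          ({X 0 ^ 2 + X 1 ^ 2, p₂, p₃} : Set (MvPolynomial (Fin 2) ℝ)) := by
  intro P
  have hk0 : k ≠ 0 := by omega
  have hζ : IsPrimitiveRoot (Complex.exp ((2 * Real.pi / k : ℝ) * Complex.I)) k := by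
    convert Complex.isPrimitiveRoot_exp k hk0 using 2
    push_cast
    ring
  rw [isInv_zpowers_iff]
  constructor
  · intro hP
    have hdiag := bind₁_diagonal_of_bind₁_rotGL_eq (bind₁_toMvPolynomial_eq_of_eval_act hP)
    refine mem_adjoin_of_map_ofRealHom_mem_adjoin (adjoin_isotropic_image_le h23 ?_)
    rw [← bind₁_isotropic_bind₁_isotropicInv (ι P), Algebra.adjoin_image]
    exact Subalgebra.mem_map.mpr ⟨_, mem_adjoin_of_bind₁_diagonal_eq hζ hk0 hdiag, rfl⟩
  · intro hP
    refine Algebra.adjoin_le (S := actInvariants _) ?_ hP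
    rintro q (rfl | rfl | rfl)
    · exact eval_act_rotGL_sq_add_sq _
    · exact fun v => (eval_act_rotGL_of_exp_pow_eq_one h23 hζ.pow_eq_one v).1
    · exact fun v => (eval_act_rotGL_of_exp_pow_eq_one h23 hζ.pow_eq_one v).2
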